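/- Let signatures at each height come from validators, and suppose a block B is finalized at height h by client c₁ with quorum Q₁ ⊆ V_h of size ≥ 2f+1 and block B' ≠ B is finalized at height h by client c₂ with quorum Q₂ ⊆ V_h of size ≥ 2f+1, where both clients agree on the validator set V_h with |V_h| = 3f+1. Then the set D = Q₁ ∩ Q₂ of double-signers satisfies |D| ≥ f+1 and the forensic extraction obtains the secret keys of all validators in D (assuming perfect extractability of the DAPS). -/
import Mathlib

/-- If a block `B` is finalized at height `h` with a quorum
`Q₁ ⊆ V_h` of size `≥ 2f+1` and `B' ≠ B` with quorum `Q₂ ⊆ V_h` of size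
`≥ 2f+1`, where `|V_h| = 3f+1`, then `D = Q₁ ∩ Q₂` satisfies `|D| ≥ f+1` and,
by perfect extractability of the DAPS, the secret keys of all validators in `D`
are obtained. -/
theorem double_signers_keys_extracted {α Block : Type*} [DecidableEq α]
    (Vh : Finset α) (f : ℕ) (hV : Vh.card = 3 * f + 1)
    (signs : α → Block → ℕ → Prop)    -- v produced a valid DAPS signature on (B, h)
    (keyObtained : α → Prop)           -- v's secret key is obtained
    (h : ℕ) (B B' : Block) (hB : B ≠ B')
    (Q₁ Q₂ : Finset α) (hQ₁ : Q₁ ⊆ Vh) (hQ₂ : Q₂ ⊆ Vh)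
    (hQ₁card : Q₁.card ≥ 2 * f + 1) (hQ₂card : Q₂.card ≥ 2 * f + 1)
    (hsig₁ : ∀ v ∈ Q₁, signs v B h) (hsig₂ : ∀ v ∈ Q₂, signs v B' h)
    -- perfect extractability: double-signing with the same context exposes the key
    (hext : ∀ v B₁ B₂, B₁ ≠ B₂ → signs v B₁ h → signs v B₂ h → keyObtained v) :
    (Q₁ ∩ Q₂).card ≥ f + 1 ∧ ∀ v ∈ Q₁ ∩ Q₂, keyObtained v := by
  constructor
  · have hu : (Q₁ ∪ Q₂).card ≤ 3 * f + 1 := hV ▸ Finset.card_le_card (Finset.union_subset hQ₁ hQ₂)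
    have := Finset.card_inter_add_card_union Q₁ Q₂
    omega
  · intro v hv
    rw [Finset.mem_inter] at hv
    exact hext v B B' hB (hsig₁ v hv.1) (hsig₂ v hv.2)
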